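/- arXiv:math/0203245 — 2 statements merged into one kernel-verified Lean document; each statement's English description precedes it below -/
import Mathlib

section
/- Schur–Weyl reciprocity (spanning part): if dim V ≥ r (or in general), the algebra End_{GL(V)}(V^{⊗r}) of GL(V)-equivariant endomorphisms of V^{⊗r} is spanned by the operators Φ(ρ) for ρ ∈ S_r, where Φ(ρ) permutes tensor factors. -/
open PiTensorProduct
open scoped TensorProduct

/-- The operator `Φ(ρ)` on `V^{⊗r}` permuting tensor factors:
`Φ(ρ)(e₁ ⊗ ⋯ ⊗ e_r) = e_{ρ⁻¹(1)} ⊗ ⋯ ⊗ e_{ρ⁻¹(r)}`. -/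
noncomputable def permTensorMap (k : Type*) [Field k] (V : Type*) [AddCommGroup V]
    [Module k V] (r : ℕ) (ρ : Equiv.Perm (Fin r)) :
    (⨂[k] (_ : Fin r), V) →ₗ[k] ⨂[k] (_ : Fin r), V :=
  (PiTensorProduct.reindex k (fun _ : Fin r => V) ρ).toLinearMap

/-!
The endomorphisms `g^{⊗r}`, `g ∈ GL(V)`, span the commutant of the `S_r`-action on `V^{⊗r}`.
Indeed `End(V)^{⊗r} → End(V^{⊗r})` is onto and intertwines the two permutation actions, so an
`S_r`-equivariant endomorphism is the image of a symmetric tensor; symmetric tensors are spanned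
by the powers `x^{⊗r}` (polarization), and `x^{⊗r}` is recovered from the `(x + c)^{⊗r}`, all but
finitely many of which are invertible, by inverting a Vandermonde matrix. Hence `T` commutes with
the commutant of `k[S_r]`; since `k[S_r]` is semisimple in characteristic zero, the Jacobson
density theorem puts `T` in the image of `k[S_r]`.
-/

open Finset

namespace Representation

variable {k G W : Type*} [Field k] [Group G] [AddCommGroup W] [Module k W]
  (ρ : Representation k G W)

theorem asAlgebraHom_mem_span_range (a : MonoidAlgebra k G) :
    ρ.asAlgebraHom a ∈ Submodule.span k (Set.range ρ) := by
  induction a using MonoidAlgebra.induction_linear with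
  | zero => simp
  | add a b ha hb => simpa using add_mem ha hb
  | single g c =>
    rw [asAlgebraHom_single]
    exact Submodule.smul_mem _ _ (Submodule.subset_span ⟨g, rfl⟩)

theorem mem_span_range_of_forall_commute [Finite G] [NeZero (Nat.card G : k)]
    [Module.Finite k W] (T : W →ₗ[k] W)
    (hT : ∀ P : W →ₗ[k] W, (∀ g, P ∘ₗ ρ g = ρ g ∘ₗ P) → T ∘ₗ P = P ∘ₗ T) :
    T ∈ Submodule.span k (Set.range ρ) := by
  have : Module.Finite (Module.End (MonoidAlgebra k G) ρ.asModule) ρ.asModule :=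
    .of_restrictScalars_finite k _ _
  have hsmul (g : G) (y : ρ.asModule) : MonoidAlgebra.of k G g • y = ρ g y := by
    rw [← asAlgebraHom_of]; rfl
  let f : Module.End (Module.End (MonoidAlgebra k G) ρ.asModule) ρ.asModule :=
    { toFun := T
      map_add' := T.map_add
      map_smul' := fun φ x => by
        have hφ : ∀ g, (φ.restrictScalars k : W →ₗ[k] W) ∘ₗ ρ g =
            ρ g ∘ₗ φ.restrictScalars k := by
          intro g
          ext x
          change φ (ρ g x) = ρ g (φ x)
          rw [← hsmul g x, ← hsmul g (φ x)]
          exact φ.map_smul _ _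
        exact LinearMap.congr_fun (hT _ hφ) x }
  obtain ⟨a, ha⟩ := Module.Finite.toModuleEnd_moduleEnd_surjective f
  convert ρ.asAlgebraHom_mem_span_range a
  ext x
  exact (LinearMap.congr_fun ha x).symm

end Representation

theorem Submodule.mem_of_forall_sum_pow_smul_mem {k M : Type*} [Field k] [AddCommGroup M]
    [Module k M] {n : ℕ} {c : Fin n → k} (hc : Function.Injective c) {e : Fin n → M}
    {P : Submodule k M} (h : ∀ i, ∑ j : Fin n, c i ^ (j : ℕ) • e j ∈ P) (j : Fin n) :
    e j ∈ P := by
  have hrows : Submodule.span k (Set.range (Matrix.vandermonde c).row) = ⊤ :=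
    (Matrix.linearIndependent_rows_of_det_ne_zero
      (Matrix.det_vandermonde_ne_zero_iff.mpr hc)).span_eq_top_of_card_eq_finrank' (by simp)
  have hle : Submodule.span k (Set.range (Matrix.vandermonde c).row) ≤
      P.comap (Fintype.linearCombination k e) := by
    rw [Submodule.span_le]
    rintro _ ⟨i, rfl⟩
    simpa [Fintype.linearCombination_apply] using h i
  simpa [Fintype.linearCombination_apply_single] using
    hle (hrows ▸ Submodule.mem_top : Pi.single j 1 ∈ _)

theorem MultilinearMap.map_const_smul_add {R ι M N : Type*} [CommSemiring R] [Fintype ι]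
    [DecidableEq ι] [AddCommMonoid M] [Module R M] [AddCommMonoid N] [Module R N]
    (f : MultilinearMap R (fun _ : ι => M) N) (a b : M) (c : R) :
    f (fun _ => c • a + b) = ∑ j : Fin (Fintype.card ι + 1),
      c ^ (j : ℕ) • ∑ s with #s = j, f (s.piecewise (fun _ => a) (fun _ => b)) := by
  have hterm (s : Finset ι) : f (s.piecewise (fun _ => c • a) (fun _ => b)) =
      c ^ #s • f (s.piecewise (fun _ => a) (fun _ => b)) := by
    rw [← prod_const, ← f.map_piecewise_smul]
    congr 1
    ext i
    by_cases hi : i ∈ s <;> simp [hi]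
  let deg : Finset ι → Fin (Fintype.card ι + 1) :=
    fun s => ⟨#s, Nat.lt_succ_of_le (card_le_univ s)⟩
  rw [show (fun _ : ι => c • a + b) = (fun _ => c • a) + (fun _ => b) from rfl, f.map_add_univ,
    ← sum_fiberwise univ deg]
  refine sum_congr rfl fun j _ => ?_
  rw [smul_sum]
  refine sum_congr ?_ fun s hs => ?_
  · ext s
    simp [deg, Fin.ext_iff]
  · rw [hterm, (mem_filter.mp hs).2]

theorem Module.End.infinite_setOf_bijective_smul_add {k M : Type*} [Field k] [Infinite k]
    [AddCommGroup M] [Module k M] [FiniteDimensional k M] (x : Module.End k M) :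
    {c : k | Function.Bijective (c • 1 + x : Module.End k M)}.Infinite := by
  refine ((x.finite_hasEigenvalue.preimage neg_injective.injOn).infinite_compl).mono ?_
  intro c hc
  have hinj : Function.Injective (c • 1 + x : Module.End k M) := by
    rw [show c • 1 + x = x - (-c) • 1 by rw [neg_smul, sub_neg_eq_add, add_comm],
      ← LinearMap.ker_eq_bot, ← Module.End.eigenspace_def]
    simpa [Module.End.hasEigenvalue_iff] using hc
  exact ⟨hinj, LinearMap.injective_iff_surjective.mp hinj⟩

theorem Finset.sum_ite_subset_neg_one_pow_card_compl {ι R : Type*} [Fintype ι] [DecidableEq ι]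
    [Ring R] (T : Finset ι) :
    ∑ S : Finset ι, (if T ⊆ S then (-1 : R) ^ #Sᶜ else 0) = if T = univ then 1 else 0 := by
  rw [← Equiv.sum_comp (compl_involutive.toPerm _)]
  simp only [Function.Involutive.coe_toPerm, compl_compl]
  simp_rw [subset_compl_comm (s := T)]
  rw [← sum_filter, filter_subset_univ]
  simpa [apply_ite] using
    congrArg (Int.cast : ℤ → R) (sum_powerset_neg_one_pow_card (x := Tᶜ))

namespace PiTensorProduct

section Polarization

variable {ι R M : Type*} [Fintype ι] [DecidableEq ι] [CommRing R] [AddCommGroup M] [Module R M]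

-- Inclusion–exclusion: only the surjective `q : ι → ι` survive in the expansion of the right side.
theorem sum_perm_tprod (f : ι → M) :
    ∑ σ : Equiv.Perm ι, tprod R (fun i => f (σ i)) =
      ∑ S : Finset ι, (-1 : R) ^ #Sᶜ • tprod R (fun _ : ι => ∑ i ∈ S, f i) := by
  have hS (S : Finset ι) : tprod R (fun _ : ι => ∑ i ∈ S, f i) =
      ∑ q : ι → ι, if ∀ i, q i ∈ S then tprod R (fun i => f (q i)) else 0 := by
    rw [MultilinearMap.map_sum_finset (tprod R) (fun _ => f) (fun _ => S), ← sum_filter]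
    congr 1
    ext q
    simp [Fintype.mem_piFinset]
  have hperm : ∑ σ : Equiv.Perm ι, tprod R (fun i => f (σ i)) =
      ∑ q : ι → ι, if univ.image q = univ then tprod R (fun i => f (q i)) else 0 := by
    have : ({q | univ.image q = univ} : Finset (ι → ι)) =
        univ.map ⟨fun σ : Equiv.Perm ι => ⇑σ, DFunLike.coe_injective⟩ := by
      ext q
      simp only [mem_filter, mem_univ, true_and, mem_map, Function.Embedding.coeFn_mk]
      refine ⟨fun h => ?_, fun ⟨σ, hσ⟩ => hσ ▸ image_univ_of_surjective σ.surjective⟩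
      have hq : Function.Surjective q := fun y => by simpa using eq_univ_iff_forall.mp h y
      exact ⟨Equiv.ofBijective q (Finite.surjective_iff_bijective.mp hq), rfl⟩
    rw [← sum_filter, this, sum_map]
    rfl
  simp_rw [hS, smul_sum, smul_ite, smul_zero]
  rw [sum_comm, hperm]
  refine sum_congr rfl fun q _ => ?_
  symm
  calc
    _ = (∑ S : Finset ι, if univ.image q ⊆ S then (-1 : R) ^ #Sᶜ else 0) •
          tprod R (fun i => f (q i)) := by
      rw [sum_smul]
      simp [image_subset_iff, ite_smul]
    _ = _ := by rw [sum_ite_subset_neg_one_pow_card_compl, ite_smul, one_smul, zero_smul]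

theorem sum_reindex_mem_span_tprod_const (t : ⨂[R] (_ : ι), M) :
    ∑ σ : Equiv.Perm ι, reindex R (fun _ => M) σ t ∈
      Submodule.span R (Set.range fun x : M => tprod R (fun _ : ι => x)) := by
  induction t using PiTensorProduct.induction_on with
  | smul_tprod c f =>
    simp_rw [map_smul, reindex_tprod, ← smul_sum]
    refine Submodule.smul_mem _ c ?_
    have hinv : ∑ σ : Equiv.Perm ι, tprod R (fun i => f (σ.symm i)) =
        ∑ σ : Equiv.Perm ι, tprod R (fun i => f (σ i)) :=
      Equiv.sum_comp (Equiv.inv _) fun σ : Equiv.Perm ι => tprod R fun i => f (σ i)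
    rw [hinv, sum_perm_tprod]
    exact Submodule.sum_mem _ fun S _ => Submodule.smul_mem _ _ (Submodule.subset_span ⟨_, rfl⟩)
  | add t u ht hu =>
    simpa only [map_add, sum_add_distrib] using add_mem ht hu

end Polarization

theorem tprod_const_mem_span_tprod_units {ι k M : Type*} [Fintype ι] [Field k]
    [Infinite k] [AddCommGroup M] [Module k M] [FiniteDimensional k M] (x : Module.End k M) :
    tprod k (fun _ : ι => x) ∈ Submodule.span k
      (Set.range fun g : M ≃ₗ[k] M => tprod k (fun _ : ι => (g : Module.End k M))) := by
  classical
  let c := (Module.End.infinite_setOf_bijective_smul_add x).natEmbedding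
  have hc : Function.Injective fun i : Fin (Fintype.card ι + 1) => (c i : k) :=
    fun i j hij => Fin.ext (c.injective (Subtype.ext hij))
  -- `(c • 1 + x)^{⊗ι}` is a polynomial in `c` whose constant coefficient is `x^{⊗ι}`.
  have key := Submodule.mem_of_forall_sum_pow_smul_mem hc
    (e := fun j => ∑ s with #s = (j : ℕ), tprod k (s.piecewise (fun _ => 1) (fun _ => x)))
    (P := Submodule.span k
      (Set.range fun g : M ≃ₗ[k] M => tprod k (fun _ : ι => (g : Module.End k M))))
    (fun i => by
      rw [← (tprod k).map_const_smul_add]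
      exact Submodule.subset_span ⟨LinearEquiv.ofBijective _ (c i).2, rfl⟩) 0
  simpa [filter_eq'] using key

theorem piTensorHomMap_reindex {ι ι' R M N : Type*} [CommSemiring R]
    [AddCommMonoid M] [Module R M] [AddCommMonoid N] [Module R N] (e : ι ≃ ι')
    (t : ⨂[R] (_ : ι), M →ₗ[R] N) :
    piTensorHomMap (reindex R (fun _ => M →ₗ[R] N) e t) =
      (reindex R (fun _ => M) e).arrowCongr (reindex R (fun _ => N) e) (piTensorHomMap t) := by
  induction t using PiTensorProduct.induction_on with
  | smul_tprod c f =>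
    simp only [map_smul]
    congr 1
    ext v
    simp only [LinearMap.compMultilinearMap_apply, piTensorHomMap_tprod_tprod, reindex_tprod,
      LinearEquiv.arrowCongr_apply, reindex_symm, Equiv.symm_symm]
    congr 1
    ext i
    rw [e.apply_symm_apply]
  | add t u ht hu => simp only [map_add, ht, hu]

section Surjective

variable {ι R : Type*} [Fintype ι] [CommSemiring R] {M N : ι → Type*}
  [∀ i, AddCommMonoid (M i)] [∀ i, Module R (M i)] [∀ i, AddCommMonoid (N i)]
  [∀ i, Module R (N i)]

theorem piTensorHomMap_tprod_basis_linearMap [DecidableEq ι] {κ ν : ι → Type*}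
    [∀ i, Fintype (κ i)] [∀ i, DecidableEq (κ i)] [∀ i, Fintype (ν i)]
    (b : ∀ i, Module.Basis (κ i) R (M i)) (c : ∀ i, Module.Basis (ν i) R (N i))
    (p : (∀ i, ν i) × (∀ i, κ i)) :
    piTensorHomMap (tprod R fun i => (b i).linearMap (c i) (p.1 i, p.2 i)) =
      (Basis.piTensorProduct b).linearMap (Basis.piTensorProduct c) p := by
  refine (Basis.piTensorProduct b).ext fun q => ?_
  rw [Module.Basis.linearMap_apply_apply, Basis.piTensorProduct_apply,
    piTensorHomMap_tprod_tprod]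
  simp only [Module.Basis.linearMap_apply_apply]
  split_ifs with h
  · simp [h]
  · obtain ⟨i, hi⟩ := Function.ne_iff.mp h
    exact MultilinearMap.map_coord_zero _ i (if_neg hi)

theorem piTensorHomMap_surjective [∀ i, Module.Free R (M i)] [∀ i, Module.Finite R (M i)]
    [∀ i, Module.Free R (N i)] [∀ i, Module.Finite R (N i)] :
    Function.Surjective (piTensorHomMap (R := R) (s := M) (t := N)) := by
  classical
  let b i := Module.Free.chooseBasis R (M i)
  let c i := Module.Free.chooseBasis R (N i)
  rw [← LinearMap.range_eq_top, eq_top_iff,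
    ← ((Basis.piTensorProduct b).linearMap (Basis.piTensorProduct c)).span_eq, Submodule.span_le]
  rintro _ ⟨p, rfl⟩
  exact ⟨_, piTensorHomMap_tprod_basis_linearMap b c p⟩

end Surjective

theorem mem_span_map_units_of_forall_commute_reindex {ι k V : Type*} [Fintype ι] [Field k]
    [CharZero k] [AddCommGroup V] [Module k V] [FiniteDimensional k V]
    (S : Module.End k (⨂[k] (_ : ι), V))
    (hS : ∀ σ : Equiv.Perm ι, S ∘ₗ reindex k (fun _ => V) σ = reindex k (fun _ => V) σ ∘ₗ S) :
    S ∈ Submodule.span k (Set.range fun g : V ≃ₗ[k] V =>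
      PiTensorProduct.map (fun _ : ι => (g : Module.End k V))) := by
  classical
  obtain ⟨t, rfl⟩ := piTensorHomMap_surjective (R := k) (M := fun _ : ι => V) (N := fun _ => V) S
  have hsymm (σ : Equiv.Perm ι) :
      piTensorHomMap (reindex k (fun _ => Module.End k V) σ t) = piTensorHomMap t := by
    refine LinearMap.ext fun u => ?_
    simpa [piTensorHomMap_reindex, LinearEquiv.arrowCongr_apply, -reindex_symm] using
      (LinearMap.congr_fun (hS σ) ((reindex k (fun _ => V) σ).symm u)).symm
  have hsum : piTensorHomMap (∑ σ : Equiv.Perm ι, reindex k (fun _ => Module.End k V) σ t) =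
      (Fintype.card (Equiv.Perm ι) : k) • piTensorHomMap t := by
    rw [map_sum, sum_congr rfl fun σ _ => hsymm σ, sum_const, card_univ, Nat.cast_smul_eq_nsmul]
  have hspan : Submodule.span k (Set.range fun x : Module.End k V => tprod k (fun _ : ι => x)) ≤
      (Submodule.span k (Set.range fun g : V ≃ₗ[k] V =>
        PiTensorProduct.map (fun _ : ι => (g : Module.End k V)))).comap piTensorHomMap := by
    rw [Submodule.span_le]
    rintro _ ⟨x, rfl⟩
    refine Submodule.span_le.mpr ?_ (tprod_const_mem_span_tprod_units x)
    rintro _ ⟨g, rfl⟩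
    exact Submodule.subset_span ⟨g, (piTensorHomMap_tprod_eq_map _).symm⟩
  have hcard : (Fintype.card (Equiv.Perm ι) : k) ≠ 0 := Nat.cast_ne_zero.mpr Fintype.card_ne_zero
  have hmem := hspan (sum_reindex_mem_span_tprod_const t)
  rw [Submodule.mem_comap, hsum] at hmem
  exact (Submodule.smul_mem_iff _ hcard).mp hmem

noncomputable def permRep (R ι M : Type*) [CommSemiring R] [AddCommMonoid M] [Module R M] :
    Representation R (Equiv.Perm ι) (⨂[R] (_ : ι), M) where
  toFun σ := (reindex R (fun _ => M) σ).toLinearMap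
  map_one' := by
    rw [show (1 : Equiv.Perm ι) = Equiv.refl ι from rfl, reindex_refl]
    rfl
  map_mul' σ τ := by
    rw [show σ * τ = τ.trans σ from rfl, ← reindex_trans]
    rfl

end PiTensorProduct

/-- Schur–Weyl reciprocity, spanning part: every `GL(V)`-equivariant endomorphism of
`V^{⊗r}` lies in the span of the tensor-factor permutation operators `Φ(ρ)`, `ρ ∈ S_r`. -/
theorem stmt_8 (k : Type*) [Field k] [CharZero k] (V : Type*) [AddCommGroup V] [Module k V]
    [FiniteDimensional k V] (r : ℕ)
    (T : (⨂[k] (_ : Fin r), V) →ₗ[k] ⨂[k] (_ : Fin r), V)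
    (hT : ∀ g : V ≃ₗ[k] V,
      T ∘ₗ PiTensorProduct.map (fun _ : Fin r => (g : V →ₗ[k] V))
        = PiTensorProduct.map (fun _ : Fin r => (g : V →ₗ[k] V)) ∘ₗ T) :
    T ∈ Submodule.span k (Set.range fun ρ : Equiv.Perm (Fin r) => permTensorMap k V r ρ) := by
  refine (permRep k (Fin r) V).mem_span_range_of_forall_commute T fun P hP => ?_
  have hGL : Submodule.span k (Set.range fun g : V ≃ₗ[k] V =>
      PiTensorProduct.map (fun _ : Fin r => (g : V →ₗ[k] V))) ≤
      (Subalgebra.centralizer k {T}).toSubmodule := by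
    rw [Submodule.span_le]
    rintro _ ⟨g, rfl⟩
    change _ ∈ Subalgebra.centralizer k {T}
    rw [Subalgebra.mem_centralizer_iff]
    rintro _ rfl
    exact hT g
  have hPT := hGL (mem_span_map_units_of_forall_commute_reindex P hP)
  rw [Subalgebra.mem_toSubmodule, Subalgebra.mem_centralizer_iff] at hPT
  exact hPT T rfl
end

section
/- Schur–Weyl reciprocity (linear independence part): if dim V ≥ r, the operators Φ(ρ) ∈ End(V^{⊗r}) for ρ ∈ S_r are linearly independent; hence if also spanning holds, they form a basis of End_{GL(V)}(V^{⊗r}). -/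
open PiTensorProduct
open scoped TensorProduct

/-!
Pick linearly independent `v₁, …, v_r` in `V`, possible as `r ≤ dim V`, and evaluate at
`x = v₁ ⊗ ⋯ ⊗ v_r`: then `Φ(ρ) x = v_{ρ⁻¹(1)} ⊗ ⋯ ⊗ v_{ρ⁻¹(r)}`. Over a field `span (vᵢ)` is a
retract of `V`, and the retraction maps these pure tensors to pairwise distinct members of the
standard basis of the tensor power of `span (vᵢ)`, so they are linearly independent, and so
are the operators `Φ(ρ)`.
-/

theorem PiTensorProduct.linearIndependent_tprod {k ι : Type*} [Field k] [Finite ι]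
    {κ M : ι → Type*} [∀ i, AddCommGroup (M i)] [∀ i, Module k (M i)] {v : ∀ i, κ i → M i}
    (hv : ∀ i, LinearIndependent k (v i)) :
    LinearIndependent k fun p : ∀ i, κ i => ⨂ₜ[k] i, v i (p i) := by
  choose g hg using fun i => LinearMap.exists_leftInverse_of_injective
    (Submodule.span k (Set.range (v i))).subtype (Submodule.ker_subtype _)
  have hgv : ∀ i j, g i (v i j) = Module.Basis.span (hv i) j := fun i j => by
    rw [Module.Basis.span_apply]
    exact LinearMap.congr_fun (hg i) ⟨v i j, Submodule.subset_span (Set.mem_range_self j)⟩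
  refine .of_comp (map g) ?_
  have hbasis : (map g ∘ fun p : ∀ i, κ i => ⨂ₜ[k] i, v i (p i)) =
      Basis.piTensorProduct fun i => Module.Basis.span (hv i) := by
    ext p
    simp [hgv]
  rw [hbasis]
  exact (Basis.piTensorProduct _).linearIndependent

theorem permTensorMap_tprod (k : Type*) [Field k] {V : Type*} [AddCommGroup V] [Module k V]
    {r : ℕ} (ρ : Equiv.Perm (Fin r)) (v : Fin r → V) :
    permTensorMap k V r ρ (tprod k v) = tprod k (v ∘ ρ.symm) :=
  reindex_tprod _ _

theorem linearIndependent_permTensorMap {k V : Type*} [Field k] [AddCommGroup V] [Module k V]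
    {r : ℕ} {v : Fin r → V} (hv : LinearIndependent k v) :
    LinearIndependent k (permTensorMap k V r) := by
  refine .of_comp (LinearMap.applyₗ (tprod k v)) ?_
  convert (linearIndependent_tprod fun _ : Fin r => hv).comp
    (fun ρ : Equiv.Perm (Fin r) => ⇑ρ.symm)
    (DFunLike.coe_injective.comp Equiv.symm_bijective.injective) using 1
  ext ρ
  exact permTensorMap_tprod k ρ v

theorem stmt_9_general (k : Type*) [Field k] (V : Type*) [AddCommGroup V] [Module k V]
    (r : ℕ) (hr : r ≤ Module.finrank k V) :
    LinearIndependent k (fun ρ : Equiv.Perm (Fin r) => permTensorMap k V r ρ) := by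
  obtain ⟨v, hv⟩ := exists_linearIndependent_of_le_finrank hr
  exact linearIndependent_permTensorMap hv

/-- Schur–Weyl reciprocity, linear independence part: if `dim V ≥ r`, the operators
`Φ(ρ)` for `ρ ∈ S_r` are linearly independent. -/
theorem stmt_9 (k : Type*) [Field k] [CharZero k] (V : Type*) [AddCommGroup V] [Module k V]
    [FiniteDimensional k V] (r : ℕ) (hr : r ≤ Module.finrank k V) :
    LinearIndependent k (fun ρ : Equiv.Perm (Fin r) => permTensorMap k V r ρ) :=
  stmt_9_general k V r hr
end
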